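/- arXiv:2003.06578 — 2 statements merged into one kernel-verified Lean document; each statement's English description precedes it below -/
import Mathlib

section
/- For $s>0$ set $\eta_1=\sinh^2 s/s^2$, $\eta_2=\sinh(2s)/(2s)$, and define for $x>0$: $g_1(x)=\frac{xe^{-x}\cosh x-x^2\eta_2+x^3\eta_1}{\sinh 2x+2x\eta_2}$, $g_2(x)=\frac{x}{\sinh 2x+2x\eta_2}$, $g_3(x)=\frac{x^2e^{-x}\cosh x-x^3\eta_2+x^2s^2\eta_1}{\sinh 2x+2x\eta_2}$, $g_4(x)=\frac{e^{-x}\sinh x+x\eta_2}{\sinh 2x+2x\eta_2}$. There exist constants $C>0$ and $s_0>0$ such that for all $0<s<s_0$, all $x>0$, and all $j\in\{1,2,3,4\}$: $|g_j(x)|+|g_j'(x)|+|g_j''(x)|\le C(1+x^3)e^{-2x}$. -/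
/-!
Dividing numerator and denominator by `x` writes each `g_j` as `N_j / D` with
`D(x) = sinh(2x)/x + 2η₂`, which no longer vanishes at `0`: `e^{2x} ≤ 2(1 + x) D(x)` and
`|D'|, |D''| ≤ 16 D`. For `s ≤ 1/2` we have `1 ≤ η₂ ≤ 2`, `η₁ ≤ 4` and `s²η₁ = sinh² s ≤ 1`, so
each numerator and its first two derivatives are `O(1 + x²)` uniformly in `s`. Near `x = 0` the
estimates for `D`, and for the removable singularity of `N₄ = (1 - e^{-2x})/(2x) + η₂`, come
from the mean value theorem. The quotient rule then bounds `|g_j| + |g_j'| + |g_j''|` by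
`O(1 + x²)/D = O((1 + x³) e^{-2x})`.
-/

open Real

noncomputable section

namespace StokesPaper

/-- `η₁(s) = sinh²s / s²`. -/
def η1 (s : ℝ) : ℝ := Real.sinh s ^ 2 / s ^ 2

/-- `η₂(s) = sinh(2s)/(2s)`. -/
def η2 (s : ℝ) : ℝ := Real.sinh (2 * s) / (2 * s)

/-- `g₁(x) = (x e^{-x} cosh x - x² η₂ + x³ η₁)/(sinh 2x + 2x η₂)`. -/
def g1 (s x : ℝ) : ℝ :=
  (x * Real.exp (-x) * Real.cosh x - x ^ 2 * η2 s + x ^ 3 * η1 s) /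
    (Real.sinh (2 * x) + 2 * x * η2 s)

/-- `g₂(x) = x/(sinh 2x + 2x η₂)`. -/
def g2 (s x : ℝ) : ℝ := x / (Real.sinh (2 * x) + 2 * x * η2 s)

/-- `g₃(x) = (x² e^{-x} cosh x - x³ η₂ + x² s² η₁)/(sinh 2x + 2x η₂)`. -/
def g3 (s x : ℝ) : ℝ :=
  (x ^ 2 * Real.exp (-x) * Real.cosh x - x ^ 3 * η2 s + x ^ 2 * s ^ 2 * η1 s) /
    (Real.sinh (2 * x) + 2 * x * η2 s)

/-- `g₄(x) = (e^{-x} sinh x + x η₂)/(sinh 2x + 2x η₂)`. -/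
def g4 (s x : ℝ) : ℝ :=
  (Real.exp (-x) * Real.sinh x + x * η2 s) / (Real.sinh (2 * x) + 2 * x * η2 s)

open Set Filter

lemma abs_le_mul_of_hasDerivAt {F F' : ℝ → ℝ} {x M : ℝ} (hx : 0 ≤ x) (h0 : F 0 = 0)
    (hF : ∀ t ∈ Icc 0 x, HasDerivAt F (F' t) t) (hF' : ∀ t ∈ Icc 0 x, |F' t| ≤ M) :
    |F x| ≤ M * x := by
  simpa [h0] using norm_image_sub_le_of_norm_deriv_le_segment'
    (fun t ht => (hF t ht).hasDerivWithinAt) (fun t ht => hF' t (Ico_subset_Icc_self ht)) x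
    (right_mem_Icc.2 hx)

section Quotient

variable {U : Set ℝ} {g P P' P'' Q Q' Q'' : ℝ → ℝ}

lemma eqOn_deriv_of_eqOn_div (hU : IsOpen U) (hg : EqOn g (fun y => P y / Q y) U)
    (hP : ∀ y ∈ U, HasDerivAt P (P' y) y) (hQ : ∀ y ∈ U, HasDerivAt Q (Q' y) y)
    (hQ0 : ∀ y ∈ U, Q y ≠ 0) :
    EqOn (deriv g) (fun y => (P' y * Q y - P y * Q' y) / Q y ^ 2) U := fun y hy =>
  (((hP y hy).div (hQ y hy) (hQ0 y hy)).congr_of_eventuallyEq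
    (eventually_of_mem (hU.mem_nhds hy) hg)).deriv

lemma deriv_deriv_of_eqOn_div (hU : IsOpen U) (hg : EqOn g (fun y => P y / Q y) U)
    (hP : ∀ y ∈ U, HasDerivAt P (P' y) y) (hP' : ∀ y ∈ U, HasDerivAt P' (P'' y) y)
    (hQ : ∀ y ∈ U, HasDerivAt Q (Q' y) y) (hQ' : ∀ y ∈ U, HasDerivAt Q' (Q'' y) y)
    (hQ0 : ∀ y ∈ U, Q y ≠ 0) {x : ℝ} (hx : x ∈ U) :
    deriv (deriv g) x = (P'' x * Q x - P x * Q'' x) / Q x ^ 2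
      - 2 * Q' x * (P' x * Q x - P x * Q' x) / Q x ^ 3 := by
  have hnum := ((hP' x hx).mul (hQ x hx)).sub ((hP x hx).mul (hQ' x hx))
  have hd := (hnum.div ((hQ x hx).pow 2) (pow_ne_zero 2 (hQ0 x hx))).congr_of_eventuallyEq
    (eventually_of_mem (hU.mem_nhds hx) (eqOn_deriv_of_eqOn_div hU hg hP hQ hQ0))
  rw [hd.deriv]
  have := hQ0 x hx
  simp only [Pi.pow_apply, Pi.mul_apply, Pi.sub_apply]
  field_simp
  ring

lemma abs_add_abs_add_abs_quotient_le {p p' p'' q q' q'' A B : ℝ} (hq : 0 < q)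
    (hp : |p| ≤ A) (hp' : |p'| ≤ A) (hp'' : |p''| ≤ A) (hq' : |q'| ≤ B * q)
    (hq'' : |q''| ≤ B * q) :
    |p / q| + |(p' * q - p * q') / q ^ 2| + |(p'' * q - p * q'') / q ^ 2
      - 2 * q' * (p' * q - p * q') / q ^ 3| ≤ A * (3 + 4 * B + 2 * B ^ 2) / q := by
  have hA : 0 ≤ A := (abs_nonneg p).trans hp
  have hB : 0 ≤ B := nonneg_of_mul_nonneg_left ((abs_nonneg q').trans hq') hq
  have h1 : |p' * q - p * q'| ≤ A * (1 + B) * q := by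
    calc |p' * q - p * q'| ≤ |p'| * q + |p| * |q'| := by
          simpa [abs_mul, abs_of_pos hq] using abs_sub (p' * q) (p * q')
      _ ≤ A * q + A * (B * q) := by gcongr
      _ = A * (1 + B) * q := by ring
  have h2 : |p'' * q - p * q''| ≤ A * (1 + B) * q := by
    calc |p'' * q - p * q''| ≤ |p''| * q + |p| * |q''| := by
          simpa [abs_mul, abs_of_pos hq] using abs_sub (p'' * q) (p * q'')
      _ ≤ A * q + A * (B * q) := by gcongr
      _ = A * (1 + B) * q := by ring
  have h3 : |2 * q' * (p' * q - p * q')| ≤ 2 * (B * q) * (A * (1 + B) * q) := by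
    rw [abs_mul, abs_mul, abs_two]; gcongr
  calc _ ≤ |p / q| + |(p' * q - p * q') / q ^ 2| + (|(p'' * q - p * q'') / q ^ 2|
        + |2 * q' * (p' * q - p * q') / q ^ 3|) := by gcongr; exact abs_sub _ _
    _ ≤ A / q + A * (1 + B) * q / q ^ 2 + (A * (1 + B) * q / q ^ 2
        + 2 * (B * q) * (A * (1 + B) * q) / q ^ 3) := by
      simp only [abs_div, abs_of_pos hq, abs_of_pos (pow_pos hq _)]
      gcongr
    _ = A * (3 + 4 * B + 2 * B ^ 2) / q := by field_simp; ring

end Quotient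

lemma hasDerivAt_sinh_two_mul (t : ℝ) :
    HasDerivAt (fun y => sinh (2 * y)) (2 * cosh (2 * t)) t := by
  simpa [mul_comm] using ((hasDerivAt_id' t).const_mul 2).sinh

lemma hasDerivAt_cosh_two_mul (t : ℝ) :
    HasDerivAt (fun y => cosh (2 * y)) (2 * sinh (2 * t)) t := by
  simpa [mul_comm] using ((hasDerivAt_id' t).const_mul 2).cosh

lemma hasDerivAt_exp_neg_two_mul (t : ℝ) :
    HasDerivAt (fun y => exp (-2 * y)) (-2 * exp (-2 * t)) t := by
  simpa [mul_comm] using ((hasDerivAt_id' t).const_mul (-2)).exp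

lemma exp_neg_two_mul_pos_le_one {y : ℝ} (hy : 0 ≤ y) : 0 < exp (-2 * y) ∧ exp (-2 * y) ≤ 1 :=
  ⟨exp_pos _, exp_le_one_iff.2 (by linarith)⟩

lemma exp_neg_mul_cosh (y : ℝ) : exp (-y) * cosh y = (1 + exp (-2 * y)) / 2 := by
  rw [cosh_eq, mul_div_assoc', mul_add, ← exp_add, ← exp_add]
  ring_nf
  simp

lemma exp_neg_mul_sinh (y : ℝ) : exp (-y) * sinh y = (1 - exp (-2 * y)) / 2 := by
  rw [sinh_eq, mul_div_assoc', mul_sub, ← exp_add, ← exp_add]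
  ring_nf
  simp

lemma cosh_le_sinh_add_one {x : ℝ} (hx : 0 ≤ x) : cosh x ≤ sinh x + 1 := by
  linarith [cosh_sub_sinh x, exp_le_one_iff.2 (neg_nonpos.2 hx)]

lemma sinh_le_two_mul {t : ℝ} (ht0 : 0 ≤ t) (ht1 : t ≤ 1) : sinh t ≤ 2 * t := by
  have hpos := (abs_le.1 (abs_exp_sub_one_le (x := t) (by rwa [abs_of_nonneg ht0]))).2
  have hneg := (abs_le.1 (abs_exp_sub_one_le (x := -t) (by rwa [abs_neg, abs_of_nonneg ht0]))).1
  rw [abs_of_nonneg ht0] at hpos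
  rw [abs_neg, abs_of_nonneg ht0] at hneg
  rw [sinh_eq]
  linarith

lemma one_le_η2 {s : ℝ} (hs : 0 < s) : 1 ≤ η2 s := by
  rw [η2, le_div_iff₀ (by positivity), one_mul]
  exact self_le_sinh_iff.2 (by positivity)

lemma η2_le_two {s : ℝ} (hs : 0 < s) (hs' : s ≤ 1 / 2) : η2 s ≤ 2 := by
  rw [η2, div_le_iff₀ (by positivity)]
  linarith [sinh_le_two_mul (by positivity : 0 ≤ 2 * s) (by linarith)]

lemma abs_η1_le_four {s : ℝ} (hs : 0 < s) (hs' : s ≤ 1) : |η1 s| ≤ 4 := by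
  have h := sinh_le_two_mul hs.le hs'
  have h0 := sinh_nonneg_iff.2 hs.le
  rw [η1, abs_of_nonneg (by positivity), div_le_iff₀ (by positivity)]
  nlinarith

lemma sq_mul_η1 {s : ℝ} (hs : s ≠ 0) : s ^ 2 * η1 s = sinh s ^ 2 := by
  rw [η1]; field_simp

lemma abs_sq_mul_η1_le_one {s : ℝ} (hs : 0 < s) (hs' : s ≤ 1 / 2) : |s ^ 2 * η1 s| ≤ 1 := by
  have h := sinh_le_two_mul hs.le (by linarith)
  have h0 := sinh_nonneg_iff.2 hs.le
  rw [sq_mul_η1 hs.ne', abs_of_nonneg (by positivity)]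
  nlinarith

lemma abs_two_mul_mul_cosh_sub_sinh_le {x : ℝ} (hx : 0 ≤ x) :
    |2 * x * cosh (2 * x) - sinh (2 * x)| ≤ 4 * x ^ 2 * sinh (2 * x) := by
  have hF : ∀ t ∈ Icc 0 x, HasDerivAt (fun t => 2 * t * cosh (2 * t) - sinh (2 * t))
      (4 * t * sinh (2 * t)) t := fun t _ =>
    ((((hasDerivAt_id' t).const_mul 2).mul (hasDerivAt_cosh_two_mul t)).sub
      (hasDerivAt_sinh_two_mul t)).congr_deriv (by ring)
  have hF' : ∀ t ∈ Icc 0 x, |4 * t * sinh (2 * t)| ≤ 4 * x * sinh (2 * x) := by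
    rintro t ⟨ht0, htx⟩
    have hs : 0 ≤ sinh (2 * t) := sinh_nonneg_iff.2 (by linarith)
    rw [abs_of_nonneg (by positivity)]
    gcongr
    exact sinh_le_sinh.2 (by linarith)
  exact (abs_le_mul_of_hasDerivAt hx (by simp) hF hF').trans_eq (by ring)

lemma abs_four_mul_sq_mul_sinh_sub_le {x : ℝ} (hx : 0 ≤ x) :
    |4 * x ^ 2 * sinh (2 * x) - 4 * x * cosh (2 * x) + 2 * sinh (2 * x)|
      ≤ 8 * x ^ 3 * cosh (2 * x) := by
  have hF : ∀ t ∈ Icc 0 x, HasDerivAt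
      (fun t => 4 * t ^ 2 * sinh (2 * t) - 4 * t * cosh (2 * t) + 2 * sinh (2 * t))
      (8 * t ^ 2 * cosh (2 * t)) t := fun t _ =>
    (((((hasDerivAt_pow 2 t).const_mul 4).mul (hasDerivAt_sinh_two_mul t)).sub
      (((hasDerivAt_id' t).const_mul 4).mul (hasDerivAt_cosh_two_mul t))).add
      ((hasDerivAt_sinh_two_mul t).const_mul 2)).congr_deriv (by ring)
  have hF' : ∀ t ∈ Icc 0 x, |8 * t ^ 2 * cosh (2 * t)| ≤ 8 * x ^ 2 * cosh (2 * x) := by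
    rintro t ⟨ht0, htx⟩
    rw [abs_of_nonneg (by positivity)]
    gcongr
    exact cosh_le_cosh.2 (by rw [abs_of_nonneg, abs_of_nonneg] <;> linarith)
  exact (abs_le_mul_of_hasDerivAt hx (by simp) hF hF').trans_eq (by ring)

section Denominator

def den (c y : ℝ) : ℝ := sinh (2 * y) / y + 2 * c

def den' (y : ℝ) : ℝ := (2 * y * cosh (2 * y) - sinh (2 * y)) / y ^ 2

def den'' (y : ℝ) : ℝ :=
  (4 * y ^ 2 * sinh (2 * y) - 4 * y * cosh (2 * y) + 2 * sinh (2 * y)) / y ^ 3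

variable {c y : ℝ}

lemma hasDerivAt_den (c : ℝ) (hy : y ≠ 0) : HasDerivAt (den c) (den' y) y :=
  (((hasDerivAt_sinh_two_mul y).div (hasDerivAt_id' y) hy).add_const (2 * c)).congr_deriv
    (by rw [den']; ring)

lemma hasDerivAt_den' (hy : y ≠ 0) : HasDerivAt den' (den'' y) y := by
  have hnum := (((hasDerivAt_id' y).const_mul 2).mul (hasDerivAt_cosh_two_mul y)).sub
    (hasDerivAt_sinh_two_mul y)
  refine (hnum.div (hasDerivAt_pow 2 y) (pow_ne_zero 2 hy)).congr_deriv ?_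
  simp only [den'', Pi.sub_apply, Pi.mul_apply]
  field_simp
  ring

lemma den_pos (hc : 0 ≤ c) (hy : 0 < y) : 0 < den c y := by
  have := sinh_pos_iff.2 (by linarith : 0 < 2 * y)
  unfold den; positivity

lemma mul_den (hy : y ≠ 0) : y * den c y = sinh (2 * y) + 2 * y * c := by
  unfold den; field_simp

lemma abs_den'_le (hc : 1 ≤ c) (hy : 0 < y) : |den' y| ≤ 16 * den c y := by
  have hsh : 0 ≤ sinh (2 * y) := sinh_nonneg_iff.2 (by linarith)
  have hch := cosh_le_sinh_add_one (by linarith : 0 ≤ 2 * y)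
  have hf : |2 * y * cosh (2 * y) - sinh (2 * y)| ≤ 16 * y * (sinh (2 * y) + 2 * y * c) := by
    rcases le_total y 1 with hy1 | hy1
    · have := abs_two_mul_mul_cosh_sub_sinh_le hy.le
      nlinarith [mul_nonneg (mul_nonneg hy.le hsh) (sub_nonneg.2 hy1)]
    · have := abs_sub (2 * y * cosh (2 * y)) (sinh (2 * y))
      rw [abs_of_nonneg hsh,
        abs_of_nonneg (by positivity : 0 ≤ 2 * y * cosh (2 * y))] at this
      nlinarith [mul_le_mul_of_nonneg_left hch (by positivity : 0 ≤ 2 * y),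
        mul_nonneg (sub_nonneg.2 hy1) hsh, mul_nonneg (sub_nonneg.2 hc) (sq_nonneg y),
        mul_nonneg hy.le (sub_nonneg.2 hy1)]
  rw [den', abs_div, abs_of_pos (by positivity : 0 < y ^ 2), div_le_iff₀ (by positivity)]
  calc _ ≤ 16 * y * (sinh (2 * y) + 2 * y * c) := hf
    _ = 16 * den c y * y ^ 2 := by rw [← mul_den hy.ne']; ring

lemma abs_den''_le (hc : 1 ≤ c) (hy : 0 < y) : |den'' y| ≤ 16 * den c y := by
  have hsh : 0 ≤ sinh (2 * y) := sinh_nonneg_iff.2 (by linarith)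
  have hch := cosh_le_sinh_add_one (by linarith : 0 ≤ 2 * y)
  have hF : |4 * y ^ 2 * sinh (2 * y) - 4 * y * cosh (2 * y) + 2 * sinh (2 * y)|
      ≤ 16 * y ^ 2 * (sinh (2 * y) + 2 * y * c) := by
    rcases le_total y 1 with hy1 | hy1
    · have := abs_four_mul_sq_mul_sinh_sub_le hy.le
      nlinarith [mul_nonneg (mul_nonneg (pow_nonneg hy.le 2) hsh) (sub_nonneg.2 hy1),
        pow_pos hy 3]
    · have h1 := abs_add_le (4 * y ^ 2 * sinh (2 * y) - 4 * y * cosh (2 * y)) (2 * sinh (2 * y))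
      have h2 := abs_sub (4 * y ^ 2 * sinh (2 * y)) (4 * y * cosh (2 * y))
      rw [abs_of_nonneg (by positivity : 0 ≤ 2 * sinh (2 * y))] at h1
      rw [abs_of_nonneg (by positivity : 0 ≤ 4 * y ^ 2 * sinh (2 * y)),
        abs_of_nonneg (by positivity : 0 ≤ 4 * y * cosh (2 * y))] at h2
      nlinarith [mul_le_mul_of_nonneg_left hch (by positivity : 0 ≤ 4 * y),
        mul_nonneg (mul_nonneg hy.le hsh) (sub_nonneg.2 hy1),
        mul_nonneg (mul_nonneg (add_nonneg hy.le zero_le_one) hsh) (sub_nonneg.2 hy1),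
        mul_nonneg (sub_nonneg.2 hc) (pow_nonneg hy.le 3),
        mul_nonneg (mul_nonneg hy.le (add_nonneg hy.le zero_le_one)) (sub_nonneg.2 hy1)]
  rw [den'', abs_div, abs_of_pos (by positivity : 0 < y ^ 3), div_le_iff₀ (by positivity)]
  calc _ ≤ 16 * y ^ 2 * (sinh (2 * y) + 2 * y * c) := hF
    _ = 16 * den c y * y ^ 3 := by rw [← mul_den hy.ne']; ring

lemma inv_den_le (hc : 1 ≤ c) (hy : 0 < y) : (den c y)⁻¹ ≤ 2 * (1 + y) * exp (-2 * y) := by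
  have hsh : 0 ≤ sinh (2 * y) := sinh_nonneg_iff.2 (by linarith)
  have hexp : exp (2 * y) ≤ 2 * sinh (2 * y) + 1 := by
    rw [← cosh_add_sinh]
    linarith [cosh_le_sinh_add_one (by linarith : 0 ≤ 2 * y)]
  have h2 : 2 ≤ den c y := by have := div_nonneg hsh hy.le; unfold den; linarith
  have key : exp (2 * y) ≤ 2 * (1 + y) * den c y := by
    nlinarith [mul_den (c := c) hy.ne', mul_nonneg hy.le (by linarith : (0 : ℝ) ≤ c)]
  rw [inv_le_iff_one_le_mul₀ (den_pos (by linarith) hy)]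
  calc (1 : ℝ) = exp (-2 * y) * exp (2 * y) := by rw [← exp_add]; simp
    _ ≤ exp (-2 * y) * (2 * (1 + y) * den c y) := by gcongr
    _ = _ := by ring

end Denominator

lemma abs_one_add_two_mul_mul_exp_sub_one_le {x : ℝ} (hx : 0 ≤ x) :
    |(1 + 2 * x) * exp (-2 * x) - 1| ≤ 4 * x ^ 2 := by
  have hF : ∀ t ∈ Icc 0 x, HasDerivAt (fun t => (1 + 2 * t) * exp (-2 * t) - 1)
      (-(4 * t * exp (-2 * t))) t := fun t _ =>
    (((((hasDerivAt_id' t).const_mul 2).const_add 1).mul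
      (hasDerivAt_exp_neg_two_mul t)).sub_const 1).congr_deriv (by ring)
  have hF' : ∀ t ∈ Icc 0 x, |-(4 * t * exp (-2 * t))| ≤ 4 * x := by
    rintro t ⟨ht0, htx⟩
    obtain ⟨he0, he1⟩ := exp_neg_two_mul_pos_le_one ht0
    rw [abs_neg, abs_of_nonneg (by positivity)]
    nlinarith
  exact (abs_le_mul_of_hasDerivAt hx (by simp) hF hF').trans_eq (by ring)

lemma abs_one_sub_mul_exp_le {x : ℝ} (hx : 0 ≤ x) :
    |1 - (1 + 2 * x + 2 * x ^ 2) * exp (-2 * x)| ≤ 4 * x ^ 3 := by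
  have hF : ∀ t ∈ Icc 0 x, HasDerivAt (fun t => 1 - (1 + 2 * t + 2 * t ^ 2) * exp (-2 * t))
      (4 * t ^ 2 * exp (-2 * t)) t := fun t _ =>
    (((((hasDerivAt_id' t).const_mul 2).const_add 1).add
      ((hasDerivAt_pow 2 t).const_mul 2)).mul (hasDerivAt_exp_neg_two_mul t)).const_sub 1
      |>.congr_deriv (by simp only [Pi.add_apply]; ring)
  have hF' : ∀ t ∈ Icc 0 x, |4 * t ^ 2 * exp (-2 * t)| ≤ 4 * x ^ 2 := by
    rintro t ⟨ht0, htx⟩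
    obtain ⟨he0, he1⟩ := exp_neg_two_mul_pos_le_one ht0
    rw [abs_of_nonneg (by positivity)]
    have : t ^ 2 ≤ x ^ 2 := by gcongr
    nlinarith [sq_nonneg t]
  exact (abs_le_mul_of_hasDerivAt hx (by simp) hF hF').trans_eq (by ring)

section Numerators

def num1 (a b y : ℝ) : ℝ := (1 + exp (-2 * y)) / 2 - a * y + b * y ^ 2
def num1' (a b y : ℝ) : ℝ := -exp (-2 * y) - a + 2 * b * y
def num1'' (b y : ℝ) : ℝ := 2 * exp (-2 * y) + 2 * b

def num3 (a b y : ℝ) : ℝ := y * (1 + exp (-2 * y)) / 2 - a * y ^ 2 + b * y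
def num3' (a b y : ℝ) : ℝ :=
  (1 + exp (-2 * y)) / 2 - y * exp (-2 * y) - 2 * a * y + b
def num3'' (a y : ℝ) : ℝ := -2 * exp (-2 * y) + 2 * y * exp (-2 * y) - 2 * a

def num4 (a y : ℝ) : ℝ := (1 - exp (-2 * y)) / (2 * y) + a
def num4' (y : ℝ) : ℝ := ((1 + 2 * y) * exp (-2 * y) - 1) / (2 * y ^ 2)
def num4'' (y : ℝ) : ℝ := (1 - (1 + 2 * y + 2 * y ^ 2) * exp (-2 * y)) / y ^ 3

variable {a b y : ℝ}

lemma hasDerivAt_num1 (a b y : ℝ) : HasDerivAt (num1 a b) (num1' a b y) y :=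
  (((((hasDerivAt_exp_neg_two_mul y).const_add 1).div_const 2).sub
    ((hasDerivAt_id' y).const_mul a)).add ((hasDerivAt_pow 2 y).const_mul b)).congr_deriv
    (by rw [num1']; ring)

lemma hasDerivAt_num1' (a b y : ℝ) : HasDerivAt (num1' a b) (num1'' b y) y :=
  ((((hasDerivAt_exp_neg_two_mul y).neg).sub_const a).add
    (((hasDerivAt_id' y).const_mul (2 * b)))).congr_deriv (by simp [num1''])

lemma hasDerivAt_num3 (a b y : ℝ) : HasDerivAt (num3 a b) (num3' a b y) y :=
  (((((hasDerivAt_id' y).mul ((hasDerivAt_exp_neg_two_mul y).const_add 1)).div_const 2).sub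
    ((hasDerivAt_pow 2 y).const_mul a)).add ((hasDerivAt_id' y).const_mul b)).congr_deriv
    (by rw [num3']; ring)

lemma hasDerivAt_num3' (a b y : ℝ) : HasDerivAt (num3' a b) (num3'' a y) y :=
  (((((hasDerivAt_exp_neg_two_mul y).const_add 1).div_const 2).sub
    ((hasDerivAt_id' y).mul (hasDerivAt_exp_neg_two_mul y))).sub
    ((hasDerivAt_id' y).const_mul (2 * a)) |>.add_const b).congr_deriv (by rw [num3'']; ring)

lemma hasDerivAt_num4 (a : ℝ) (hy : y ≠ 0) : HasDerivAt (num4 a) (num4' y) y :=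
  ((((hasDerivAt_exp_neg_two_mul y).const_sub 1).div ((hasDerivAt_id' y).const_mul 2)
    (by simpa using hy)).add_const a).congr_deriv (by rw [num4']; field_simp; ring)

lemma hasDerivAt_num4' (hy : y ≠ 0) : HasDerivAt num4' (num4'' y) y := by
  have hnum := ((((hasDerivAt_id' y).const_mul 2).const_add 1).mul
      (hasDerivAt_exp_neg_two_mul y)).sub_const 1
  refine (hnum.div ((hasDerivAt_pow 2 y).const_mul 2) (by simpa using hy)).congr_deriv ?_
  simp only [num4'', Pi.mul_apply]
  field_simp
  ring

lemma num1_bounds (ha : |a| ≤ 2) (hb : |b| ≤ 4) (hy : 0 < y) :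
    |num1 a b y| ≤ 20 * (1 + y ^ 2) ∧ |num1' a b y| ≤ 20 * (1 + y ^ 2) ∧
      |num1'' b y| ≤ 20 * (1 + y ^ 2) := by
  obtain ⟨he0, he1⟩ := exp_neg_two_mul_pos_le_one hy.le
  obtain ⟨ha0, ha1⟩ := abs_le.1 ha
  obtain ⟨hb0, hb1⟩ := abs_le.1 hb
  refine ⟨abs_le.2 ⟨?_, ?_⟩, abs_le.2 ⟨?_, ?_⟩, abs_le.2 ⟨?_, ?_⟩⟩ <;>
    simp only [num1, num1', num1''] <;>
    nlinarith [sq_nonneg (y - 1), mul_nonneg hy.le (sub_nonneg.2 ha1),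
      mul_nonneg hy.le (neg_le_iff_add_nonneg.1 ha0), mul_nonneg (sq_nonneg y) (sub_nonneg.2 hb1),
      mul_nonneg (sq_nonneg y) (neg_le_iff_add_nonneg.1 hb0),
      mul_nonneg hy.le (sub_nonneg.2 hb1), mul_nonneg hy.le (neg_le_iff_add_nonneg.1 hb0)]

lemma num3_bounds (ha : |a| ≤ 2) (hb : |b| ≤ 4) (hy : 0 < y) :
    |num3 a b y| ≤ 20 * (1 + y ^ 2) ∧ |num3' a b y| ≤ 20 * (1 + y ^ 2) ∧
      |num3'' a y| ≤ 20 * (1 + y ^ 2) := by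
  obtain ⟨he0, he1⟩ := exp_neg_two_mul_pos_le_one hy.le
  obtain ⟨ha0, ha1⟩ := abs_le.1 ha
  obtain ⟨hb0, hb1⟩ := abs_le.1 hb
  have hye : 0 ≤ y * exp (-2 * y) ∧ y * exp (-2 * y) ≤ y :=
    ⟨by positivity, mul_le_of_le_one_right hy.le he1⟩
  refine ⟨abs_le.2 ⟨?_, ?_⟩, abs_le.2 ⟨?_, ?_⟩, abs_le.2 ⟨?_, ?_⟩⟩ <;>
    simp only [num3, num3', num3''] <;>
    nlinarith [sq_nonneg (y - 1), mul_nonneg (sq_nonneg y) (sub_nonneg.2 ha1),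
      mul_nonneg (sq_nonneg y) (neg_le_iff_add_nonneg.1 ha0),
      mul_nonneg hy.le (sub_nonneg.2 ha1), mul_nonneg hy.le (neg_le_iff_add_nonneg.1 ha0),
      mul_nonneg hy.le (sub_nonneg.2 hb1), mul_nonneg hy.le (neg_le_iff_add_nonneg.1 hb0)]

lemma num4_bounds (ha : |a| ≤ 2) (hy : 0 < y) :
    |num4 a y| ≤ 20 * (1 + y ^ 2) ∧ |num4' y| ≤ 20 * (1 + y ^ 2) ∧
      |num4'' y| ≤ 20 * (1 + y ^ 2) := by
  obtain ⟨he0, he1⟩ := exp_neg_two_mul_pos_le_one hy.le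
  have hfrac : |(1 - exp (-2 * y)) / (2 * y)| ≤ 1 := by
    rw [abs_div, abs_of_pos (by positivity : 0 < 2 * y), div_le_one (by positivity),
      abs_of_nonneg (by linarith)]
    linarith [add_one_le_exp (-2 * y)]
  refine ⟨?_, ?_, ?_⟩
  · calc |num4 a y| ≤ |(1 - exp (-2 * y)) / (2 * y)| + |a| := abs_add_le _ _
      _ ≤ 20 * (1 + y ^ 2) := by nlinarith [sq_nonneg y]
  · rw [num4', abs_div, abs_of_pos (by positivity : 0 < 2 * y ^ 2), div_le_iff₀ (by positivity)]
    nlinarith [abs_one_add_two_mul_mul_exp_sub_one_le hy.le, pow_nonneg (sq_nonneg y) 2]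
  · rw [num4'', abs_div, abs_of_pos (by positivity : 0 < y ^ 3), div_le_iff₀ (by positivity)]
    nlinarith [abs_one_sub_mul_exp_le hy.le, pow_pos hy 3, pow_pos hy 5]

end Numerators

lemma eqOn_g1 (s : ℝ) : EqOn (g1 s) (fun y => num1 (η2 s) (η1 s) y / den (η2 s) y) (Ioi 0) := by
  intro y (hy : 0 < y)
  have hnum : y * exp (-y) * cosh y - y ^ 2 * η2 s + y ^ 3 * η1 s = y * num1 (η2 s) (η1 s) y := by
    rw [mul_assoc, exp_neg_mul_cosh, num1]; ring
  rw [g1, hnum, ← mul_den hy.ne', mul_div_mul_left _ _ hy.ne']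

lemma eqOn_g2 (s : ℝ) : EqOn (g2 s) (fun y => 1 / den (η2 s) y) (Ioi 0) := by
  intro y (hy : 0 < y)
  rw [g2, ← mul_den hy.ne', div_mul_cancel_left₀ hy.ne', inv_eq_one_div]

lemma eqOn_g3 (s : ℝ) :
    EqOn (g3 s) (fun y => num3 (η2 s) (s ^ 2 * η1 s) y / den (η2 s) y) (Ioi 0) := by
  intro y (hy : 0 < y)
  have hnum : y ^ 2 * exp (-y) * cosh y - y ^ 3 * η2 s + y ^ 2 * s ^ 2 * η1 s
      = y * num3 (η2 s) (s ^ 2 * η1 s) y := by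
    rw [mul_assoc, exp_neg_mul_cosh, num3]; ring
  rw [g3, hnum, ← mul_den hy.ne', mul_div_mul_left _ _ hy.ne']

lemma eqOn_g4 (s : ℝ) : EqOn (g4 s) (fun y => num4 (η2 s) y / den (η2 s) y) (Ioi 0) := by
  intro y (hy : 0 < y)
  have hy0 : y ≠ 0 := hy.ne'
  have hnum : exp (-y) * sinh y + y * η2 s = y * num4 (η2 s) y := by
    rw [exp_neg_mul_sinh, num4]; field_simp
  rw [g4, hnum, ← mul_den hy.ne', mul_div_mul_left _ _ hy.ne']

lemma sum_abs_derivs_le_of_eqOn_div_den {g N N' N'' : ℝ → ℝ} {c x K : ℝ} (hc : 1 ≤ c)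
    (hg : EqOn g (fun y => N y / den c y) (Ioi 0))
    (hN : ∀ y ∈ Ioi 0, HasDerivAt N (N' y) y) (hN' : ∀ y ∈ Ioi 0, HasDerivAt N' (N'' y) y)
    (hx : 0 < x) (h0 : |N x| ≤ K * (1 + x ^ 2)) (h1 : |N' x| ≤ K * (1 + x ^ 2))
    (h2 : |N'' x| ≤ K * (1 + x ^ 2)) :
    |g x| + |deriv g x| + |deriv (deriv g) x| ≤ 2316 * K * (1 + x ^ 3) * exp (-2 * x) := by
  have hden : ∀ y ∈ Ioi (0 : ℝ), HasDerivAt (den c) (den' y) y :=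
    fun y hy => hasDerivAt_den c (ne_of_gt hy)
  have hden' : ∀ y ∈ Ioi (0 : ℝ), HasDerivAt den' (den'' y) y :=
    fun y hy => hasDerivAt_den' (ne_of_gt hy)
  have hden0 : ∀ y ∈ Ioi (0 : ℝ), den c y ≠ 0 := fun y hy => (den_pos (by linarith) hy).ne'
  have hK : 0 ≤ K := nonneg_of_mul_nonneg_left ((abs_nonneg _).trans h0) (by positivity)
  rw [hg hx, eqOn_deriv_of_eqOn_div isOpen_Ioi hg hN hden hden0 hx,
    deriv_deriv_of_eqOn_div isOpen_Ioi hg hN hN' hden hden' hden0 hx]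
  calc _ ≤ K * (1 + x ^ 2) * (3 + 4 * 16 + 2 * 16 ^ 2) / den c x :=
        abs_add_abs_add_abs_quotient_le (den_pos (by linarith) hx) h0 h1 h2
          (abs_den'_le hc hx) (abs_den''_le hc hx)
    _ = 579 * (K * (1 + x ^ 2)) * (den c x)⁻¹ := by ring
    _ ≤ 579 * (K * (1 + x ^ 2)) * (2 * (1 + x) * exp (-2 * x)) := by
        gcongr; exact inv_den_le hc hx
    _ = 1158 * K * exp (-2 * x) * ((1 + x ^ 2) * (1 + x)) := by ring
    _ ≤ 1158 * K * exp (-2 * x) * (2 * (1 + x ^ 3)) := by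
        gcongr 1158 * K * exp (-2 * x) * ?_
        nlinarith [mul_nonneg (sq_nonneg (x - 1)) hx.le]
    _ = 2316 * K * (1 + x ^ 3) * exp (-2 * x) := by ring

/-- uniform estimates for `g₁, g₂, g₃, g₄` and their first two derivatives. -/
theorem statement16 :
    ∃ C > (0 : ℝ), ∃ s₀ > (0 : ℝ), ∀ s : ℝ, 0 < s → s < s₀ → ∀ x : ℝ, 0 < x →
      |g1 s x| + |deriv (g1 s) x| + |deriv (deriv (g1 s)) x| ≤
        C * (1 + x ^ 3) * Real.exp (-2 * x) ∧
      |g2 s x| + |deriv (g2 s) x| + |deriv (deriv (g2 s)) x| ≤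
        C * (1 + x ^ 3) * Real.exp (-2 * x) ∧
      |g3 s x| + |deriv (g3 s) x| + |deriv (deriv (g3 s)) x| ≤
        C * (1 + x ^ 3) * Real.exp (-2 * x) ∧
      |g4 s x| + |deriv (g4 s) x| + |deriv (deriv (g4 s)) x| ≤
        C * (1 + x ^ 3) * Real.exp (-2 * x) := by
  refine ⟨2316 * 20, by norm_num, 1 / 2, by norm_num, fun s hs hs' x hx => ?_⟩
  have hc := one_le_η2 hs
  have ha : |η2 s| ≤ 2 := abs_le.2 ⟨by linarith, η2_le_two hs hs'.le⟩
  have hb : |η1 s| ≤ 4 := abs_η1_le_four hs (by linarith)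
  have hb' : |s ^ 2 * η1 s| ≤ 4 := (abs_sq_mul_η1_le_one hs hs'.le).trans (by norm_num)
  obtain ⟨h10, h11, h12⟩ := num1_bounds ha hb hx
  obtain ⟨h30, h31, h32⟩ := num3_bounds ha hb' hx
  obtain ⟨h40, h41, h42⟩ := num4_bounds ha hx
  have hone : |(1 : ℝ)| ≤ 20 * (1 + x ^ 2) := by rw [abs_one]; nlinarith [sq_nonneg x]
  have hzero : |(0 : ℝ)| ≤ 20 * (1 + x ^ 2) := by rw [abs_zero]; positivity
  refine ⟨?_, ?_, ?_, ?_⟩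
  · exact sum_abs_derivs_le_of_eqOn_div_den hc (eqOn_g1 s) (fun y _ => hasDerivAt_num1 _ _ y)
      (fun y _ => hasDerivAt_num1' _ _ y) hx h10 h11 h12
  · exact sum_abs_derivs_le_of_eqOn_div_den (N' := fun _ => 0) (N'' := fun _ => 0) hc
      (eqOn_g2 s) (fun y _ => hasDerivAt_const y 1) (fun y _ => hasDerivAt_const y 0)
      hx hone hzero hzero
  · exact sum_abs_derivs_le_of_eqOn_div_den hc (eqOn_g3 s) (fun y _ => hasDerivAt_num3 _ _ y)
      (fun y _ => hasDerivAt_num3' _ _ y) hx h30 h31 h32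
  · exact sum_abs_derivs_le_of_eqOn_div_den hc (eqOn_g4 s)
      (fun y hy => hasDerivAt_num4 _ (ne_of_gt hy)) (fun y hy => hasDerivAt_num4' (ne_of_gt hy))
      hx h40 h41 h42

end StokesPaper
end
end

section
/- Let $a>0$ and define on $\{(\zeta,\theta):\cosh\zeta\neq\cos\theta\}$ the functions $\alpha(\zeta,\theta)=(1-\cosh\zeta\cos\theta)/(\cosh\zeta-\cos\theta)$, $\beta(\zeta,\theta)=\sinh\zeta\sin\theta/(\cosh\zeta-\cos\theta)$, $h(\zeta,\theta)=(\cosh\zeta-\cos\theta)/a$, and the unit vector fields $e_\zeta=\alpha e_x-\beta e_y$, $e_\theta=-\beta e_x-\alpha e_y$. Then there is a constant $C>0$ (which may depend on $a$ and on an upper bound $s$ for $|\zeta|$) such that for all $(\zeta,\theta)$ with $|\zeta|\le s$ and $\cosh\zeta\neq\cos\theta$, the Cartesian gradients satisfy $|\nabla e_\zeta|+|\nabla e_\theta|\le C(|\zeta|+|\theta|)$; equivalently, $|h\,\partial_\zeta\alpha|+|h\,\partial_\theta\alpha|+|h\,\partial_\zeta\beta|+|h\,\partial_\theta\beta|\le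 C(|\zeta|+|\theta|)$. -/
/-!
Up to the factor `1/a`, each scaled partial derivative is a component of the unit vector
`(α, β)` times `sin θ` or `sinh ζ`:
`h ∂_ζ α = -β sin θ / a`, `h ∂_θ α = β sinh ζ / a`, `h ∂_ζ β = α sin θ / a`, `h ∂_θ β = -α sinh ζ / a`.
Since `α² + β² = 1`, `|sin θ| ≤ |θ|` and, by the mean value theorem, `|sinh ζ| ≤ cosh s |ζ|` for
`|ζ| ≤ s`, the sum is at most `2 cosh s (|ζ| + |θ|) / a`.
-/

open Real

noncomputable section

namespace StokesPaper

/-- `α(ζ,θ) = (1 - cosh ζ cos θ)/(cosh ζ - cos θ)`. -/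
def alphaB (ζ θ : ℝ) : ℝ := (1 - Real.cosh ζ * Real.cos θ) / (Real.cosh ζ - Real.cos θ)

/-- `β(ζ,θ) = sinh ζ sin θ/(cosh ζ - cos θ)`. -/
def betaB (ζ θ : ℝ) : ℝ := Real.sinh ζ * Real.sin θ / (Real.cosh ζ - Real.cos θ)

/-- The scaling factor `h(ζ,θ) = (cosh ζ - cos θ)/a`. -/
def hB (a ζ θ : ℝ) : ℝ := (Real.cosh ζ - Real.cos θ) / a

lemma abs_sinh_le_cosh_mul_abs {x s : ℝ} (hx : |x| ≤ s) : |sinh x| ≤ cosh s * |x| := by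
  have hs : 0 ≤ s := (abs_nonneg x).trans hx
  have hmem : ∀ {y : ℝ}, |y| ≤ s → y ∈ Set.Icc (-s) s := fun hy => abs_le.1 hy
  have := (convex_Icc (-s) s).norm_image_sub_le_of_norm_hasDerivWithin_le
    (fun y _ => (hasDerivAt_sinh y).hasDerivWithinAt)
    (fun y hy => by
      rw [Real.norm_eq_abs, abs_of_pos (cosh_pos y), cosh_le_cosh, abs_of_nonneg hs]
      exact abs_le.2 hy)
    (hmem (y := 0) (by simpa using hs)) (hmem hx)
  simpa using this

variable {ζ θ : ℝ}

lemma alphaB_sq_add_betaB_sq (hne : cosh ζ ≠ cos θ) : alphaB ζ θ ^ 2 + betaB ζ θ ^ 2 = 1 := by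
  have hd : cosh ζ - cos θ ≠ 0 := sub_ne_zero.2 hne
  simp only [alphaB, betaB]
  field_simp
  linear_combination -(1 - cos θ ^ 2) * cosh_sq_sub_sinh_sq ζ + sinh ζ ^ 2 * sin_sq_add_cos_sq θ

lemma abs_alphaB_le_one (hne : cosh ζ ≠ cos θ) : |alphaB ζ θ| ≤ 1 :=
  (sq_le_one_iff_abs_le_one _).1 (by nlinarith [alphaB_sq_add_betaB_sq hne, sq_nonneg (betaB ζ θ)])

lemma abs_betaB_le_one (hne : cosh ζ ≠ cos θ) : |betaB ζ θ| ≤ 1 :=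
  (sq_le_one_iff_abs_le_one _).1 (by nlinarith [alphaB_sq_add_betaB_sq hne, sq_nonneg (alphaB ζ θ)])

lemma hasDerivAt_alphaB_fst (hne : cosh ζ ≠ cos θ) :
    HasDerivAt (fun t => alphaB t θ) (-(betaB ζ θ * sin θ) / (cosh ζ - cos θ)) ζ := by
  have hd : cosh ζ - cos θ ≠ 0 := sub_ne_zero.2 hne
  refine ((((hasDerivAt_cosh ζ).mul_const (cos θ)).const_sub 1).div
    ((hasDerivAt_cosh ζ).sub_const (cos θ)) hd).congr_deriv ?_
  rw [betaB]
  field_simp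
  linear_combination sinh ζ * sin_sq_add_cos_sq θ

lemma hasDerivAt_alphaB_snd (hne : cosh ζ ≠ cos θ) :
    HasDerivAt (fun t => alphaB ζ t) (betaB ζ θ * sinh ζ / (cosh ζ - cos θ)) θ := by
  have hd : cosh ζ - cos θ ≠ 0 := sub_ne_zero.2 hne
  refine ((((hasDerivAt_cos θ).const_mul (cosh ζ)).const_sub 1).div
    ((hasDerivAt_cos θ).const_sub (cosh ζ)) hd).congr_deriv ?_
  rw [betaB]
  field_simp
  linear_combination sin θ * cosh_sq_sub_sinh_sq ζ

lemma hasDerivAt_betaB_fst (hne : cosh ζ ≠ cos θ) :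
    HasDerivAt (fun t => betaB t θ) (alphaB ζ θ * sin θ / (cosh ζ - cos θ)) ζ := by
  have hd : cosh ζ - cos θ ≠ 0 := sub_ne_zero.2 hne
  refine (((hasDerivAt_sinh ζ).mul_const (sin θ)).div
    ((hasDerivAt_cosh ζ).sub_const (cos θ)) hd).congr_deriv ?_
  rw [alphaB]
  field_simp
  linear_combination sin θ * cosh_sq_sub_sinh_sq ζ

lemma hasDerivAt_betaB_snd (hne : cosh ζ ≠ cos θ) :
    HasDerivAt (fun t => betaB ζ t) (-(alphaB ζ θ * sinh ζ) / (cosh ζ - cos θ)) θ := by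
  have hd : cosh ζ - cos θ ≠ 0 := sub_ne_zero.2 hne
  refine (((hasDerivAt_sin θ).const_mul (sinh ζ)).div
    ((hasDerivAt_cos θ).const_sub (cosh ζ)) hd).congr_deriv ?_
  rw [alphaB]
  field_simp
  linear_combination -sinh ζ * sin_sq_add_cos_sq θ

lemma hB_mul_div (a y : ℝ) (hne : cosh ζ ≠ cos θ) :
    hB a ζ θ * (y / (cosh ζ - cos θ)) = y / a := by
  rw [hB, div_mul_div_comm, mul_comm (cosh ζ - cos θ), mul_div_mul_right _ _ (sub_ne_zero.2 hne)]

theorem statement17_general (a s : ℝ) (ha : 0 < a) :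
    ∃ C > (0 : ℝ), ∀ ζ θ : ℝ, |ζ| ≤ s → Real.cosh ζ ≠ Real.cos θ →
      |hB a ζ θ * deriv (fun t => alphaB t θ) ζ| +
      |hB a ζ θ * deriv (fun t => alphaB ζ t) θ| +
      |hB a ζ θ * deriv (fun t => betaB t θ) ζ| +
      |hB a ζ θ * deriv (fun t => betaB ζ t) θ| ≤ C * (|ζ| + |θ|) := by
  refine ⟨2 * cosh s / a, by positivity, fun ζ θ hζ hne => ?_⟩
  rw [(hasDerivAt_alphaB_fst hne).deriv, (hasDerivAt_alphaB_snd hne).deriv,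
    (hasDerivAt_betaB_fst hne).deriv, (hasDerivAt_betaB_snd hne).deriv,
    hB_mul_div a _ hne, hB_mul_div a _ hne, hB_mul_div a _ hne, hB_mul_div a _ hne]
  have hα := abs_alphaB_le_one hne
  have hβ := abs_betaB_le_one hne
  have hsin : |sin θ| ≤ |θ| := abs_sin_le_abs
  have hsinh := abs_sinh_le_cosh_mul_abs hζ
  have hcosh : 1 ≤ cosh s := one_le_cosh s
  simp only [abs_div, abs_neg, abs_mul, abs_of_pos ha]
  calc |betaB ζ θ| * |sin θ| / a + |betaB ζ θ| * |sinh ζ| / a + |alphaB ζ θ| * |sin θ| / a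
        + |alphaB ζ θ| * |sinh ζ| / a
      = (|alphaB ζ θ| + |betaB ζ θ|) * (|sin θ| + |sinh ζ|) / a := by ring
    _ ≤ 2 * (cosh s * (|ζ| + |θ|)) / a := by
        gcongr
        · linarith
        · nlinarith [abs_nonneg θ]
    _ = 2 * cosh s / a * (|ζ| + |θ|) := by ring

/-- the Cartesian gradients of the bipolar unit vector fields `e_ζ, e_θ` are
`O(|ζ|+|θ|)`; equivalently, the scaled partial derivatives of `α` and `β` are. -/
theorem statement17 (a s : ℝ) (ha : 0 < a) (hs : 0 < s) :
    ∃ C > (0 : ℝ), ∀ ζ θ : ℝ, |ζ| ≤ s → Real.cosh ζ ≠ Real.cos θ →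
      |hB a ζ θ * deriv (fun t => alphaB t θ) ζ| +
      |hB a ζ θ * deriv (fun t => alphaB ζ t) θ| +
      |hB a ζ θ * deriv (fun t => betaB t θ) ζ| +
      |hB a ζ θ * deriv (fun t => betaB ζ t) θ| ≤ C * (|ζ| + |θ|) :=
  statement17_general a s ha

end StokesPaper
end
end
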